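/- Let f : S¹ → S¹ be a homeomorphism of the circle whose set of non-wandering points is finite (and nonempty). Then the polynomial entropy of the induced map 2^f on the hyperspace 2^{S¹} of nonempty closed subsets of the circle is infinite. -/

import Mathlib

open Filter Topology TopologicalSpace Set
open scoped ENNReal

/-- The dynamic distance `d_n^f(x,y) = max_{0 ≤ k ≤ n-1} d(f^k x, f^k y)`. -/
noncomputable def dynDist {X : Type*} [MetricSpace X] (f : X → X) (n : ℕ) (x y : X) : ℝ :=
  ((Finset.range n).sup fun k => nndist (f^[k] x) (f^[k] y) : NNReal)

/-- A finite set `E` is `(n,ε)`-separated for `f`. -/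
def IsDynSeparated {X : Type*} [MetricSpace X] (f : X → X) (n : ℕ) (ε : ℝ) (E : Finset X) :
    Prop :=
  ∀ x ∈ E, ∀ y ∈ E, x ≠ y → ε ≤ dynDist f n x y

/-- `S(n,ε;Y)`: the maximal cardinality of an `(n,ε)`-separated subset of `Y`. -/
noncomputable def maxSep {X : Type*} [MetricSpace X] (f : X → X) (Y : Set X) (n : ℕ) (ε : ℝ) :
    ℕ :=
  sSup {m : ℕ | ∃ E : Finset X, ↑E ⊆ Y ∧ E.card = m ∧ IsDynSeparated f n ε E}

/-- The polynomial entropy `h_pol(f;Y)`.  Since `ε ↦ S(n,ε;Y)` is nonincreasing, the limit as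
`ε → 0` of the `limsup` coincides with the supremum over `ε > 0`. -/
noncomputable def polEnt {X : Type*} [MetricSpace X] (f : X → X) (Y : Set X) : ℝ≥0∞ :=
  ⨆ (ε : ℝ) (_ : 0 < ε),
    Filter.atTop.limsup fun n : ℕ =>
      ENNReal.ofReal (Real.log (maxSep f Y n ε) / Real.log n)

/-- The set of non-wandering points of `f`. -/
def nonWandering {X : Type*} [TopologicalSpace X] (f : X → X) : Set X :=
  {p | ∀ U ∈ nhds p, ∃ n : ℕ, 1 ≤ n ∧ (f^[n] '' U ∩ U).Nonempty}

/-- The induced map `2^f` on the hyperspace of nonempty closed (= compact) subsets of a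
compact metric space. -/
noncomputable def induced2 {X : Type*} [TopologicalSpace X] (f : X → X) (hf : Continuous f) :
    NonemptyCompacts X → NonemptyCompacts X :=
  fun A => ⟨⟨f '' A, A.isCompact.image hf⟩, A.nonempty.image f⟩

/-- The hyperspace `C(X)` of subcontinua (nonempty closed connected subsets) of `X`. -/
abbrev Subcontinua (X : Type*) [TopologicalSpace X] :=
  {A : NonemptyCompacts X // IsConnected (A : Set X)}

/-- The induced map `C(f)` on the hyperspace of subcontinua. -/
noncomputable def inducedC {X : Type*} [TopologicalSpace X] (f : X → X) (hf : Continuous f) :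
    Subcontinua X → Subcontinua X :=
  fun A => ⟨induced2 f hf A.1, A.2.image f hf.continuousOn⟩

/-- The `k`-fold symmetric product `X^{*k}`: nonempty subsets of `X` with at most `k` points. -/
abbrev SymProd (X : Type*) [TopologicalSpace X] (k : ℕ) :=
  {A : NonemptyCompacts X // (A : Set X).Finite ∧ (A : Set X).ncard ≤ k}

/-- The induced map `f^{*k}` on the `k`-fold symmetric product. -/
noncomputable def inducedSym {X : Type*} [TopologicalSpace X] (f : X → X) (hf : Continuous f)
    (k : ℕ) : SymProd X k → SymProd X k :=
  fun A => ⟨induced2 f hf A.1, A.2.1.image f, le_trans (Set.ncard_image_le A.2.1) A.2.2⟩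

/-- Sets `U 0, …, U (L-1)` are mutually singular for `f`. -/
def MutuallySingularSets {X : Type*} [TopologicalSpace X] (f : X → X) {L : ℕ}
    (U : Fin L → Set X) : Prop :=
  ∀ M : ℕ, ∃ x : X, ∃ n : Fin L → ℕ, (∀ j, 1 ≤ n j ∧ f^[n j] x ∈ U j) ∧
    ∀ i j, i ≠ j → (M : ℤ) < |(n i : ℤ) - (n j : ℤ)|

/-- A finite set `S ⊆ X \ NW(f)` is singular: it consists of mutually singular points, i.e.
every family of respective neighbourhoods of its points is mutually singular. -/
def IsSingularSet {X : Type*} [TopologicalSpace X] (f : X → X) (S : Set X) : Prop :=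
  S.Finite ∧ (∀ x ∈ S, x ∉ nonWandering f) ∧
  ∀ (L : ℕ) (x : Fin L → X), Function.Injective x → Set.range x = S →
    ∀ U : Fin L → Set X, (∀ j, U j ∈ nhds (x j)) → MutuallySingularSets f U

/-- The set of codings of length-`n` orbit segments of points of `Y` relative to the family
`F`, where the letter `none` stands for `Y_∞ = Y \ ⋃ F`. -/
def codings {X : Type*} (f : X → X) {L : ℕ} (F : Fin L → Set X) (Y : Set X) (n : ℕ) :
    Set (Fin n → Option (Fin L)) :=
  {w | ∃ x ∈ Y, ∀ j : Fin n, match w j with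
    | some i => f^[(j : ℕ)] x ∈ F i
    | none => f^[(j : ℕ)] x ∈ Y \ ⋃ i, F i}

/-- The polynomial entropy of `f` on `Y` relative to the family `F`:
`limsup_n log #A_n(F;Y) / log n`. -/
noncomputable def polEntRel {X : Type*} (f : X → X) {L : ℕ} (F : Fin L → Set X) (Y : Set X) :
    ℝ≥0∞ :=
  Filter.atTop.limsup fun n : ℕ =>
    ENNReal.ofReal (Real.log ((codings f F Y n).ncard) / Real.log n)

/-- The circle is connected. -/
theorem circle_isConnected_univ : IsConnected (Set.univ : Set Circle) := by
  have hsurj : Function.Surjective Circle.exp := fun z => ⟨Complex.arg z, Circle.exp_arg z⟩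
  have : ConnectedSpace Circle :=
    { toPreconnectedSpace := ⟨by
        rw [← Set.image_univ_of_surjective hsurj]
        exact isPreconnected_univ.image _ Circle.exp.continuous.continuousOn⟩,
      toNonempty := ⟨1⟩ }
  exact isConnected_univ

/-!
A wandering point `x` has a ball `B(x, δ)` that no forward iterate of `f` returns to, so every
point `f^[s] (g^[t] x)` with `s ≠ t` of its orbit (with `g` a right inverse of `f`) is `δ`-far
from `x`. For `S ⊆ {0, …, n-1}` put `A_S = {g^[t] x | t ∈ S ∪ {n}}`. If `s ∈ S \ T`, then
`f^[s] A_S` contains `x` while `f^[s] A_T` stays `δ`-far from `x`; so the `2^n` sets `A_S` are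
`(n, δ)`-separated for `2^f`, and `S(n, δ) ≥ 2^n` outgrows every power of `n`.
-/
open Metric Function

section DynamicalDistance

variable {X : Type*} [MetricSpace X]

theorem dynDist_eq_dist_orbit (f : X → X) (n : ℕ) (x y : X) :
    dynDist f n x y = dist (fun k : Fin n => f^[k] x) (fun k : Fin n => f^[k] y) := by
  rw [dynDist, dist_pi_def, ← Nat.Iio_eq_range, ← Fin.map_valEmbedding_univ, Finset.sup_map]
  rfl

theorem dist_iterate_le_dynDist (f : X → X) {k n : ℕ} (hk : k < n) (x y : X) :
    dist (f^[k] x) (f^[k] y) ≤ dynDist f n x y := by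
  rw [dynDist_eq_dist_orbit]
  exact dist_le_pi_dist (fun k : Fin n => f^[k] x) (fun k : Fin n => f^[k] y) ⟨k, hk⟩

theorem dynDist_comm (f : X → X) (n : ℕ) (x y : X) : dynDist f n x y = dynDist f n y x := by
  simp only [dynDist_eq_dist_orbit, dist_comm]

theorem exists_card_le_of_pairwise_le_dist [CompactSpace X] {ε : ℝ} (hε : 0 < ε) :
    ∃ M : ℕ, ∀ s : Finset X, (s : Set X).Pairwise (fun a b => ε ≤ dist a b) → s.card ≤ M := by
  set r : NNReal := (ε / 4).toNNReal with hr
  have hr_coe : (r : ℝ) = ε / 4 := Real.coe_toNNReal _ (by positivity)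
  obtain ⟨C, -, hCfin, hC⟩ := exists_finite_isCover_of_isCompact (ε := r)
    (by simp [hr, hε]) (isCompact_univ (X := X))
  refine ⟨hCfin.toFinset.card, fun s hs => ?_⟩
  have hsep : IsSeparated ((2 * r : NNReal) : ℝ≥0∞) (s : Set X) := by
    refine hs.mono' fun a b hab => ?_
    rw [edist_dist, ← ENNReal.ofReal_coe_nnreal]
    exact (ENNReal.ofReal_lt_ofReal_iff (by linarith)).2 (by push_cast; linarith)
  have hcard := (hsep.encard_le_packingNumber (subset_univ _)).trans
    ((packingNumber_two_mul_le_externalCoveringNumber _ _).trans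
      hC.externalCoveringNumber_le_encard)
  rw [Set.encard_coe_eq_coe_finsetCard, hCfin.encard_eq_coe_toFinset_card] at hcard
  exact_mod_cast hcard

theorem bddAbove_card_isDynSeparated [CompactSpace X] (f : X → X) (Y : Set X) (n : ℕ) {ε : ℝ}
    (hε : 0 < ε) :
    BddAbove {m : ℕ | ∃ E : Finset X, ↑E ⊆ Y ∧ E.card = m ∧ IsDynSeparated f n ε E} := by
  obtain ⟨M, hM⟩ := exists_card_le_of_pairwise_le_dist (X := Fin n → X) hε
  refine ⟨M, ?_⟩
  rintro _ ⟨E, -, rfl, hE⟩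
  classical
  simp only [IsDynSeparated, dynDist_eq_dist_orbit] at hE
  set orbit : X → Fin n → X := fun x k => f^[k] x
  have hinj : Set.InjOn orbit E := fun x hx y hy hxy => by
    by_contra hne
    have := hE x hx y hy hne
    simp only [orbit] at hxy
    rw [hxy, dist_self] at this
    linarith
  rw [← Finset.card_image_of_injOn hinj]
  refine hM _ ?_
  simp only [Finset.coe_image, Set.Pairwise, Set.mem_image, Finset.mem_coe]
  rintro _ ⟨x, hx, rfl⟩ _ ⟨y, hy, rfl⟩ hxy
  exact hE x hx y hy (ne_of_apply_ne orbit hxy)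

theorem IsDynSeparated.card_le_maxSep [CompactSpace X] {f : X → X} {Y : Set X} {n : ℕ} {ε : ℝ}
    (hε : 0 < ε) {E : Finset X} (hE : IsDynSeparated f n ε E) (hEY : ↑E ⊆ Y) :
    E.card ≤ maxSep f Y n ε :=
  le_csSup (bddAbove_card_isDynSeparated f Y n hε) ⟨E, hEY, rfl, hE⟩

theorem natCast_le_log_div_log_of_pow_le {m n a : ℕ} (hn : 2 ≤ n) (h : n ^ m ≤ a) :
    (m : ℝ) ≤ Real.log a / Real.log n := by
  have hlog : 0 < Real.log n := Real.log_pos (by exact_mod_cast hn)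
  rw [le_div_iff₀ hlog, ← Real.log_pow]
  exact Real.log_le_log (by positivity) (by exact_mod_cast h)

theorem polEnt_eq_top_of_two_pow_le_maxSep (f : X → X) (Y : Set X) {ε : ℝ} (hε : 0 < ε)
    (h : ∀ n, 2 ^ n ≤ maxSep f Y n ε) : polEnt f Y = ⊤ := by
  suffices Tendsto (fun n : ℕ => ENNReal.ofReal (Real.log (maxSep f Y n ε) / Real.log n))
      atTop (𝓝 ⊤) from eq_top_iff.2 (le_iSup₂_of_le ε hε this.limsup_eq.ge)
  refine ENNReal.tendsto_nhds_top fun m => ?_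
  have hpoly : ∀ᶠ n : ℕ in atTop, (n : ℝ) ^ (m + 1) ≤ 2 ^ n := by
    filter_upwards [(isLittleO_pow_const_const_pow_of_one_lt (R := ℝ) (m + 1)
      one_lt_two).eventuallyLE] with n hn
    simpa using hn
  filter_upwards [hpoly, eventually_ge_atTop 2] with n hpow hn
  have hgrowth : n ^ (m + 1) ≤ maxSep f Y n ε :=
    (by exact_mod_cast hpow : n ^ (m + 1) ≤ 2 ^ n).trans (h n)
  calc (m : ℝ≥0∞) < (m + 1 : ℕ) := by exact_mod_cast m.lt_succ_self
    _ = ENNReal.ofReal (m + 1 : ℕ) := (ENNReal.ofReal_natCast _).symm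
    _ ≤ _ := ENNReal.ofReal_le_ofReal (natCast_le_log_div_log_of_pow_le hn hgrowth)

end DynamicalDistance

section Hyperspace

variable {X : Type*}

theorem coe_induced2_iterate [TopologicalSpace X] (f : X → X) (hf : Continuous f) (k : ℕ)
    (A : NonemptyCompacts X) : ((induced2 f hf)^[k] A : Set X) = f^[k] '' A := by
  induction k with
  | zero => simp
  | succ k ih =>
    rw [iterate_succ_apply', iterate_succ', image_comp, ← ih]
    rfl

theorem NonemptyCompacts.le_dist_of_mem [MetricSpace X] {A B : NonemptyCompacts X} {x : X}
    {δ : ℝ} (hx : x ∈ (A : Set X)) (hB : ∀ y ∈ (B : Set X), δ ≤ dist x y) : δ ≤ dist A B := by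
  rw [NonemptyCompacts.dist_eq]
  calc δ ≤ infDist x B := (le_infDist B.nonempty).2 hB
    _ ≤ hausdorffDist (A : Set X) B := infDist_le_hausdorffDist_of_mem hx
        (hausdorffEDist_ne_top_of_nonempty_of_bounded A.nonempty B.nonempty
          A.isCompact.isBounded B.isCompact.isBounded)

end Hyperspace

section Wandering

variable {X : Type*} [MetricSpace X] {f : X → X} {x : X}

theorem exists_ball_iterate_notMem_of_notMem_nonWandering (hx : x ∉ nonWandering f) :
    ∃ δ > 0, ∀ n, 1 ≤ n → ∀ y ∈ ball x δ, f^[n] y ∉ ball x δ := by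
  obtain ⟨U, hU, hwander⟩ : ∃ U ∈ 𝓝 x, ∀ n, 1 ≤ n → ¬(f^[n] '' U ∩ U).Nonempty := by
    simpa [nonWandering] using hx
  obtain ⟨δ, hδ, hball⟩ := Metric.mem_nhds_iff.1 hU
  exact ⟨δ, hδ, fun n hn y hy hfy => hwander n hn ⟨_, ⟨y, hball hy, rfl⟩, hball hfy⟩⟩

theorem le_dist_iterate_iterate_of_ne {g : X → X} (hg : RightInverse g f) {δ : ℝ}
    (hδ : ∀ n, 1 ≤ n → ∀ y ∈ ball x δ, f^[n] y ∉ ball x δ) {s t : ℕ} (hst : s ≠ t) :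
    δ ≤ dist (f^[s] (g^[t] x)) x := by
  rw [← not_lt, ← mem_ball]
  intro hmem
  have hx : x ∈ ball x δ := mem_ball_self (pos_of_mem_ball hmem)
  rcases Nat.lt_or_gt_of_ne hst with hlt | hgt
  · obtain ⟨k, rfl⟩ := Nat.exists_eq_add_of_lt hlt
    rw [add_assoc, iterate_add_apply, hg.iterate s] at hmem
    exact hδ (k + 1) (by omega) _ hmem (by rwa [hg.iterate (k + 1)])
  · obtain ⟨k, rfl⟩ := Nat.exists_eq_add_of_lt hgt
    rw [add_assoc, add_comm, iterate_add_apply, hg.iterate t] at hmem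
    exact hδ (k + 1) (by omega) x hx hmem

end Wandering

section Construction

variable {X : Type*} [MetricSpace X]

-- The index `a` is there only to make the set nonempty.
def iterateSet (g : X → X) (x : X) (a : ℕ) (S : Finset ℕ) : NonemptyCompacts X :=
  ⟨⟨(fun t => g^[t] x) '' ↑(insert a S), ((insert a S).finite_toSet.image _).isCompact⟩,
    (Finset.coe_nonempty.2 (Finset.insert_nonempty a S)).image _⟩

theorem coe_iterateSet (g : X → X) (x : X) (a : ℕ) (S : Finset ℕ) :
    (iterateSet g x a S : Set X) = (fun t => g^[t] x) '' ↑(insert a S) :=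
  rfl

theorem le_dynDist_iterateSet {f g : X → X} (hf : Continuous f) (hg : RightInverse g f) {x : X}
    {δ : ℝ} (hδ : ∀ n, 1 ≤ n → ∀ y ∈ ball x δ, f^[n] y ∉ ball x δ) {n s : ℕ} (hsn : s < n)
    {S T : Finset ℕ} (hsS : s ∈ S) (hsT : s ∉ T) :
    δ ≤ dynDist (induced2 f hf) n (iterateSet g x n S) (iterateSet g x n T) := by
  refine le_trans ?_ (dist_iterate_le_dynDist _ hsn _ _)
  refine NonemptyCompacts.le_dist_of_mem (x := x) ?_ ?_
  · rw [coe_induced2_iterate, coe_iterateSet, ← image_comp]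
    exact ⟨s, by simp [hsS], hg.iterate s x⟩
  · rw [coe_induced2_iterate, coe_iterateSet, ← image_comp]
    rintro _ ⟨t, ht, rfl⟩
    rw [dist_comm]
    refine le_dist_iterate_iterate_of_ne hg hδ ?_
    rintro rfl
    simp only [Finset.coe_insert, mem_insert_iff, Finset.mem_coe] at ht
    exact ht.elim (by omega) hsT

theorem exists_two_pow_le_maxSep_induced2 [CompactSpace X] {f : X → X} (hf : Continuous f)
    (hsurj : Surjective f) {x : X} (hx : x ∉ nonWandering f) :
    ∃ δ > 0, ∀ n, 2 ^ n ≤ maxSep (induced2 f hf) univ n δ := by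
  classical
  obtain ⟨δ, hδ, hwander⟩ := exists_ball_iterate_notMem_of_notMem_nonWandering hx
  have hg : RightInverse (surjInv hsurj) f := rightInverse_surjInv hsurj
  refine ⟨δ, hδ, fun n => ?_⟩
  set A := iterateSet (surjInv hsurj) x n
  have hsep : ∀ S ∈ (Finset.range n).powerset, ∀ T ∈ (Finset.range n).powerset, S ≠ T →
      δ ≤ dynDist (induced2 f hf) n (A S) (A T) := by
    intro S hS T hT hST
    rw [Finset.mem_powerset] at hS hT
    by_cases hsub : S ⊆ T
    · obtain ⟨t, htT, htS⟩ := Finset.not_subset.1 fun hTS => hST (hsub.antisymm hTS)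
      rw [dynDist_comm]
      exact le_dynDist_iterateSet hf hg hwander (Finset.mem_range.1 (hT htT)) htT htS
    · obtain ⟨s, hsS, hsT⟩ := Finset.not_subset.1 hsub
      exact le_dynDist_iterateSet hf hg hwander (Finset.mem_range.1 (hS hsS)) hsS hsT
  have hinj : InjOn A (Finset.range n).powerset := fun S hS T hT hAST => by
    by_contra hST
    have := hsep S hS T hT hST
    rw [hAST, dynDist_eq_dist_orbit, dist_self] at this
    linarith
  have hE : IsDynSeparated (induced2 f hf) n δ ((Finset.range n).powerset.image A) := by
    simp only [IsDynSeparated, Finset.mem_image]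
    rintro _ ⟨S, hS, rfl⟩ _ ⟨T, hT, rfl⟩ hAST
    exact hsep S hS T hT (ne_of_apply_ne A hAST)
  calc 2 ^ n = ((Finset.range n).powerset.image A).card := by
        rw [Finset.card_image_of_injOn hinj, Finset.card_powerset, Finset.card_range]
    _ ≤ _ := hE.card_le_maxSep hδ (subset_univ _)

theorem polEnt_induced2_eq_top [CompactSpace X] {f : X → X} (hf : Continuous f)
    (hsurj : Surjective f) {x : X} (hx : x ∉ nonWandering f) :
    polEnt (induced2 f hf) univ = ⊤ := by
  obtain ⟨δ, hδ, h⟩ := exists_two_pow_le_maxSep_induced2 hf hsurj hx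
  exact polEnt_eq_top_of_two_pow_le_maxSep _ _ hδ h

end Construction

theorem stmt5_general (f : Circle ≃ₜ Circle) (hNW : (nonWandering ⇑f).Finite) :
    polEnt (induced2 ⇑f f.continuous) Set.univ = ⊤ := by
  have : Infinite Circle := Circle.argEquiv.infinite_iff.2
    (Set.Ioc_infinite (by linarith [Real.pi_pos])).to_subtype
  obtain ⟨x, hx⟩ := hNW.infinite_compl.nonempty
  exact polEnt_induced2_eq_top f.continuous f.surjective hx

theorem stmt5 (f : Circle ≃ₜ Circle) (hNW : (nonWandering ⇑f).Finite)
    (hne : (nonWandering ⇑f).Nonempty) :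
    polEnt (induced2 ⇑f f.continuous) Set.univ = ⊤ :=
  stmt5_general f hNW
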